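/- Let X ⊂ ℝⁿ be a poised interpolation set and for a quadratic base Q let M_Q(f) denote the (unique) least Frobenius norm updating model of f on X based on Q. Then for any constants ν₁, ν₂ ∈ ℝ and any f, M_{ν₁Q_α + ν₂}(f) = ν₁·M_{Q_α}(f) + (1 − ν₁)·M₀(f), where M₀(f) is the least Frobenius norm interpolant of f on X (base zero). -/

import Mathlib

/-!
A quadratic `Q` interpolating `f` on `X` is the least Frobenius norm updating model based on `B`
exactly when `∇²Q − ∇²B` is Frobenius-orthogonal to the Hessian of every quadratic vanishing on `X`
(the first-order condition of a convex quadratic program over an affine set). This condition is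
affine in the pair `(Q, B)`: the combination `ν₁ M_{Q_α}(f) + (1 − ν₁) M₀(f)` interpolates `f`, and
its Hessian residual with respect to `ν₁ Q_α + ν₂` is `ν₁` times that of `M_{Q_α}(f)` plus
`1 − ν₁` times that of `M₀(f)`, hence orthogonal. Uniqueness then identifies it with
`M_{ν₁ Q_α + ν₂}(f)`.
-/

structure Quad (n : ℕ) where
  c : ℝ
  g : Fin n → ℝ
  A : Matrix (Fin n) (Fin n) ℝ
  symm : A.IsSymm

namespace Quad
variable {n : ℕ}

noncomputable def eval (Q : Quad n) (x : Fin n → ℝ) : ℝ :=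
  Q.c + (∑ i, Q.g i * x i) + (1 / 2) * ∑ i, ∑ j, x i * Q.A i j * x j

def add (P Q : Quad n) : Quad n :=
  ⟨P.c + Q.c, P.g + Q.g, P.A + Q.A, P.symm.add Q.symm⟩

def sub (P Q : Quad n) : Quad n :=
  ⟨P.c - Q.c, P.g - Q.g, P.A - Q.A, P.symm.sub Q.symm⟩

def smul (r : ℝ) (Q : Quad n) : Quad n :=
  ⟨r * Q.c, r • Q.g, r • Q.A, by
    simp only [Matrix.IsSymm, Matrix.transpose_smul, Q.symm.eq]⟩

def addConst (Q : Quad n) (r : ℝ) : Quad n := ⟨Q.c + r, Q.g, Q.A, Q.symm⟩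

protected def zero : Quad n := ⟨0, 0, 0, by simp [Matrix.IsSymm]⟩

end Quad

noncomputable def frobSq {n : ℕ} (M : Matrix (Fin n) (Fin n) ℝ) : ℝ := ∑ i, ∑ j, (M i j) ^ 2

def Interpolates {n m : ℕ} (Q : Quad n) (h : (Fin n → ℝ) → ℝ)
    (x : Fin m → (Fin n → ℝ)) : Prop :=
  ∀ i, Q.eval (x i) = h (x i)

def IsLFNModel {n m : ℕ} (B : Quad n) (h : (Fin n → ℝ) → ℝ)
    (x : Fin m → (Fin n → ℝ)) (Q : Quad n) : Prop :=
  Interpolates Q h x ∧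
    ∀ Q' : Quad n, Interpolates Q' h x → frobSq (Q.A - B.A) ≤ frobSq (Q'.A - B.A)

namespace Quad
variable {n : ℕ}

@[simp] lemma add_A (P Q : Quad n) : (P.add Q).A = P.A + Q.A := rfl

@[simp] lemma sub_A (P Q : Quad n) : (P.sub Q).A = P.A - Q.A := rfl

@[simp] lemma smul_A (r : ℝ) (Q : Quad n) : (Q.smul r).A = r • Q.A := rfl

@[simp] lemma addConst_A (Q : Quad n) (r : ℝ) : (Q.addConst r).A = Q.A := rfl

@[simp] lemma zero_A : (Quad.zero : Quad n).A = 0 := rfl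

lemma eval_add (P Q : Quad n) (y : Fin n → ℝ) :
    (P.add Q).eval y = P.eval y + Q.eval y := by
  simp only [eval, add, Pi.add_apply, Matrix.add_apply, add_mul, mul_add,
    Finset.sum_add_distrib]
  ring

lemma eval_sub (P Q : Quad n) (y : Fin n → ℝ) :
    (P.sub Q).eval y = P.eval y - Q.eval y := by
  simp only [eval, sub, Pi.sub_apply, Matrix.sub_apply, sub_mul, mul_sub,
    Finset.sum_sub_distrib]
  ring

lemma eval_smul (r : ℝ) (Q : Quad n) (y : Fin n → ℝ) :
    (Q.smul r).eval y = r * Q.eval y := by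
  have hq : ∀ i j, y i * (r • Q.A) i j * y j = r * (y i * Q.A i j * y j) := fun i j => by
    rw [Matrix.smul_apply, smul_eq_mul]; ring
  simp only [eval, smul, Pi.smul_apply, smul_eq_mul, mul_assoc, hq, ← Finset.mul_sum]
  ring

end Quad

section Interpolation
variable {n m : ℕ} {x : Fin m → (Fin n → ℝ)} {f : (Fin n → ℝ) → ℝ} {P Q : Quad n}

lemma Interpolates.sub (hP : Interpolates P f x) (hQ : Interpolates Q f x) :
    Interpolates (P.sub Q) 0 x := fun i => by
  rw [Quad.eval_sub, hP i, hQ i, sub_self, Pi.zero_apply]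

lemma Interpolates.add_smul (hP : Interpolates P f x) (hQ : Interpolates Q 0 x) (t : ℝ) :
    Interpolates (P.add (Q.smul t)) f x := fun i => by
  rw [Quad.eval_add, Quad.eval_smul, hP i, hQ i, Pi.zero_apply, mul_zero, add_zero]

lemma Interpolates.affineCombination (hP : Interpolates P f x) (hQ : Interpolates Q f x)
    (ν : ℝ) : Interpolates ((P.smul ν).add (Q.smul (1 - ν))) f x := fun i => by
  rw [Quad.eval_add, Quad.eval_smul, Quad.eval_smul, hP i, hQ i]
  ring

end Interpolation

noncomputable def frobInner {n : ℕ} (M N : Matrix (Fin n) (Fin n) ℝ) : ℝ :=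
  ∑ i, ∑ j, M i j * N i j

section Frobenius
variable {n : ℕ}

lemma frobSq_nonneg (M : Matrix (Fin n) (Fin n) ℝ) : 0 ≤ frobSq M :=
  Finset.sum_nonneg fun _ _ => Finset.sum_nonneg fun _ _ => sq_nonneg _

lemma frobSq_add (M N : Matrix (Fin n) (Fin n) ℝ) :
    frobSq (M + N) = frobSq M + 2 * frobInner M N + frobSq N := by
  have h : ∀ i j, (M + N) i j ^ 2 = M i j ^ 2 + (2 * (M i j * N i j) + N i j ^ 2) :=
    fun i j => by rw [Matrix.add_apply]; ring
  simp only [frobSq, frobInner, h, Finset.sum_add_distrib, Finset.mul_sum]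
  ring

lemma frobSq_smul (r : ℝ) (M : Matrix (Fin n) (Fin n) ℝ) :
    frobSq (r • M) = r ^ 2 * frobSq M := by
  simp only [frobSq, Matrix.smul_apply, smul_eq_mul, mul_pow, Finset.mul_sum]

lemma frobInner_add_left (M N P : Matrix (Fin n) (Fin n) ℝ) :
    frobInner (M + N) P = frobInner M P + frobInner N P := by
  simp only [frobInner, Matrix.add_apply, add_mul, Finset.sum_add_distrib]

lemma frobInner_smul_left (r : ℝ) (M N : Matrix (Fin n) (Fin n) ℝ) :
    frobInner (r • M) N = r * frobInner M N := by
  simp only [frobInner, Matrix.smul_apply, smul_eq_mul, Finset.mul_sum, mul_assoc]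

lemma frobInner_smul_right (r : ℝ) (M N : Matrix (Fin n) (Fin n) ℝ) :
    frobInner M (r • N) = r * frobInner M N := by
  simp only [frobInner, Matrix.smul_apply, smul_eq_mul, Finset.mul_sum, mul_left_comm]

end Frobenius

section Characterization
variable {n m : ℕ} {x : Fin m → (Fin n → ℝ)} {f : (Fin n → ℝ) → ℝ} {B Q V : Quad n}

lemma IsLFNModel.frobInner_eq_zero (hQ : IsLFNModel B f x Q) (hV : Interpolates V 0 x) :
    frobInner (Q.A - B.A) V.A = 0 := by
  set c := frobInner (Q.A - B.A) V.A
  have hquad : ∀ t : ℝ, 0 ≤ frobSq V.A * (t * t) + 2 * c * t + 0 := fun t => by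
    have hmin := hQ.2 _ (hQ.1.add_smul hV t)
    have hA : (Q.add (V.smul t)).A - B.A = (Q.A - B.A) + t • V.A := by
      simp only [Quad.add_A, Quad.smul_A]; abel
    rw [hA, frobSq_add, frobInner_smul_right, frobSq_smul] at hmin
    linarith
  have hdiscr := discrim_le_zero hquad
  rw [discrim] at hdiscr
  nlinarith [sq_nonneg c]

lemma isLFNModel_of_frobInner_eq_zero (hQ : Interpolates Q f x)
    (horth : ∀ V : Quad n, Interpolates V 0 x → frobInner (Q.A - B.A) V.A = 0) :
    IsLFNModel B f x Q := by
  refine ⟨hQ, fun Q' hQ' => ?_⟩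
  have hA : Q'.A - B.A = (Q.A - B.A) + (Q'.sub Q).A := by
    rw [Quad.sub_A]; abel
  rw [hA, frobSq_add, horth _ (hQ'.sub hQ)]
  linarith [frobSq_nonneg (Q'.sub Q).A]

end Characterization

theorem lfn_updating_model_scaled_base_general
    {n m : ℕ} (x : Fin m → (Fin n → ℝ)) (Qα : Quad n) (ν₁ ν₂ : ℝ)
    (f : (Fin n → ℝ) → ℝ)
    (Qβ Qφ Qγ : Quad n)
    (hβ : IsLFNModel Qα f x Qβ)
    (hφ : IsLFNModel Quad.zero f x Qφ)
    (hγuniq : ∀ Q : Quad n, IsLFNModel ((Qα.smul ν₁).addConst ν₂) f x Q → Q = Qγ) :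
    Qγ = (Qβ.smul ν₁).add (Qφ.smul (1 - ν₁)) := by
  refine (hγuniq _ (isLFNModel_of_frobInner_eq_zero (hβ.1.affineCombination hφ.1 ν₁)
    fun V hV => ?_)).symm
  have hresidual : ((Qβ.smul ν₁).add (Qφ.smul (1 - ν₁))).A - ((Qα.smul ν₁).addConst ν₂).A
      = ν₁ • (Qβ.A - Qα.A) + (1 - ν₁) • (Qφ.A - Quad.zero.A) := by
    simp only [Quad.add_A, Quad.smul_A, Quad.addConst_A, Quad.zero_A]
    module
  rw [hresidual, frobInner_add_left, frobInner_smul_left, frobInner_smul_left,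
    hβ.frobInner_eq_zero hV, hφ.frobInner_eq_zero hV, mul_zero, mul_zero, add_zero]

/-- Theorem `anotherview`: for constants `ν₁, ν₂`, the least Frobenius norm
updating model of `f` based on `ν₁Q_α + ν₂` satisfies
`M_{ν₁Q_α+ν₂}(f) = ν₁ M_{Q_α}(f) + (1 − ν₁) M₀(f)`,
where `M₀(f)` is the least Frobenius norm interpolant of `f` (base zero). -/
theorem lfn_updating_model_scaled_base
    {n m : ℕ} (x : Fin m → (Fin n → ℝ)) (Qα : Quad n) (ν₁ ν₂ : ℝ)
    (f : (Fin n → ℝ) → ℝ)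
    (Qβ Qφ Qγ : Quad n)
    (hβ : IsLFNModel Qα f x Qβ)
    (hφ : IsLFNModel Quad.zero f x Qφ)
    (hγ : IsLFNModel ((Qα.smul ν₁).addConst ν₂) f x Qγ)
    (hγuniq : ∀ Q : Quad n, IsLFNModel ((Qα.smul ν₁).addConst ν₂) f x Q → Q = Qγ) :
    Qγ = (Qβ.smul ν₁).add (Qφ.smul (1 - ν₁)) :=
  lfn_updating_model_scaled_base_general x Qα ν₁ ν₂ f Qβ Qφ Qγ hβ hφ hγuniq
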